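/- Row-stochastic-like contraction: for the matrix P = D̃^{-1/2} Ã D̃^{-1/2} of a connected graph with self-loops, and any H^{(0)} ∈ ℝ^{n×d}, the sequence H^{(t)} = P^t H^{(0)} converges: its limit is the orthogonal projection of H^{(0)} onto the span of D̃^{1/2}·1 (1 the all-ones vector), i.e., each column of H^{(t)} converges to a multiple of the vector D̃^{1/2}·1. -/

import Mathlib

open Matrix

noncomputable def Atilde {n : ℕ} (G : SimpleGraph (Fin n)) [DecidableRel G.Adj] :
    Matrix (Fin n) (Fin n) ℝ := G.adjMatrix ℝ + 1

noncomputable def degT {n : ℕ} (G : SimpleGraph (Fin n)) [DecidableRel G.Adj] (i : Fin n) : ℝ :=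
  ∑ j, Atilde G i j

noncomputable def Dtilde {n : ℕ} (G : SimpleGraph (Fin n)) [DecidableRel G.Adj] :
    Matrix (Fin n) (Fin n) ℝ := Matrix.diagonal (degT G)

noncomputable def DinvSqrt {n : ℕ} (G : SimpleGraph (Fin n)) [DecidableRel G.Adj] :
    Matrix (Fin n) (Fin n) ℝ := Matrix.diagonal (fun i => (Real.sqrt (degT G i))⁻¹)

noncomputable def Lsym {n : ℕ} (G : SimpleGraph (Fin n)) [DecidableRel G.Adj] :
    Matrix (Fin n) (Fin n) ℝ := DinvSqrt G * (Dtilde G - Atilde G) * DinvSqrt G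

/-- Euclidean (ℓ²) norm of a vector. -/
noncomputable def eucNorm {m : ℕ} (v : Fin m → ℝ) : ℝ := Real.sqrt (∑ i, (v i) ^ 2)

/- The matrix P = 1 - Lsym is symmetric with spectrum in (-1, 1]: Lsym is a congruence transform
of the Laplacian, hence positive semidefinite, and 1 + P = D̃^{-1/2} (D̃ + Ã) D̃^{-1/2} is positive
definite because D̃ + Ã = (D + A) + 2, where D + A is the Gram matrix of the unoriented incidence
matrix. Expanding x in an orthonormal eigenbasis (u_k, λ_k) of P gives
P^t x = ∑ λ_k^t ⟪u_k, x⟫ u_k, and λ_k^t → 0 unless λ_k = 1, so P^t x tends to the orthogonal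
projection of x onto the 1-eigenspace of P, which is the kernel of Lsym. Finally Lsym v = 0 iff
D̃^{-1/2} v is constant on connected components, so for a connected graph this eigenspace is the
line spanned by D̃^{1/2} 1. -/

open Filter Topology Module End WithLp

namespace LinearMap.IsSymmetric

variable {𝕜 E : Type*} [RCLike 𝕜] [NormedAddCommGroup E] [InnerProductSpace 𝕜 E]
  [FiniteDimensional 𝕜 E] {T : E →ₗ[𝕜] E} {n : ℕ}

local notation "⟪" x ", " y "⟫" => inner 𝕜 x y

lemma pow_apply_eigenvectorBasis (hT : T.IsSymmetric) (hn : finrank 𝕜 E = n) (k : Fin n)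
    (t : ℕ) :
    (T ^ t) (hT.eigenvectorBasis hn k) =
      (hT.eigenvalues hn k : 𝕜) ^ t • hT.eigenvectorBasis hn k := by
  induction t with
  | zero => simp
  | succ t ih =>
    rw [pow_succ', Module.End.mul_apply, ih, map_smul, apply_eigenvectorBasis, smul_smul, pow_succ]

lemma starProjection_eigenspace_eq_sum (hT : T.IsSymmetric) (hn : finrank 𝕜 E = n) (μ : ℝ)
    (x : E) :
    (eigenspace T μ).starProjection x =
      ∑ k with hT.eigenvalues hn k = μ,
        ⟪hT.eigenvectorBasis hn k, x⟫ • hT.eigenvectorBasis hn k := by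
  set b := hT.eigenvectorBasis hn
  refine Submodule.eq_starProjection_of_mem_of_inner_eq_zero ?_ fun v hv => ?_
  · refine Submodule.sum_mem _ fun k hk => Submodule.smul_mem _ _ ?_
    rw [← (Finset.mem_filter.mp hk).2]
    exact (hT.hasEigenvector_eigenvectorBasis hn k).1
  · have hx := b.sum_repr' x
    rw [← Finset.sum_filter_add_sum_filter_not _ (fun k => hT.eigenvalues hn k = μ)] at hx
    rw [sub_eq_of_eq_add' hx.symm, sum_inner]
    refine Finset.sum_eq_zero fun k hk => ?_
    have hne : (hT.eigenvalues hn k : 𝕜) ≠ μ := by exact_mod_cast (Finset.mem_filter.mp hk).2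
    rw [inner_smul_left]
    exact mul_eq_zero_of_right _ <| hT.orthogonalFamily_eigenspaces hne
      ⟨b k, (hT.hasEigenvector_eigenvectorBasis hn k).1⟩ ⟨v, hv⟩

theorem tendsto_pow_apply_starProjection_eigenspace_one (hT : T.IsSymmetric)
    (hspec : ∀ μ : ℝ, HasEigenvalue T μ → μ ∈ Set.Ioc (-1) 1) (x : E) :
    Tendsto (fun t => (T ^ t) x) atTop (𝓝 ((eigenspace T 1).starProjection x)) := by
  set b := hT.eigenvectorBasis rfl
  rw [← RCLike.ofReal_one, hT.starProjection_eigenspace_eq_sum rfl, Finset.sum_filter]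
  conv => enter [1, t]; rw [← b.sum_repr' x, map_sum]
  refine tendsto_finsetSum _ fun k _ => ?_
  simp_rw [LinearMap.map_smul, b, pow_apply_eigenvectorBasis]
  split_ifs with hk
  · simp [hk]
  · have h := hspec _ (hT.hasEigenvalue_eigenvalues rfl k)
    have habs : ‖(hT.eigenvalues rfl k : 𝕜)‖ < 1 := by
      rw [RCLike.norm_ofReal, abs_lt]
      exact ⟨h.1, lt_of_le_of_ne h.2 hk⟩
    simpa using ((tendsto_pow_atTop_nhds_zero_of_norm_lt_one habs).smul_const (b k)).const_smul
      ⟪b k, x⟫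

end LinearMap.IsSymmetric

lemma Matrix.mem_Ioc_of_hasEigenvalue_toEuclideanLin {ι : Type*} [Fintype ι] [DecidableEq ι]
    {A : Matrix ι ι ℝ} (h₁ : (1 - A).PosSemidef) (h₂ : (1 + A).PosDef) {μ : ℝ}
    (hμ : HasEigenvalue (toEuclideanLin A) μ) : μ ∈ Set.Ioc (-1) 1 := by
  obtain ⟨v, hv, hv0⟩ := hμ.exists_hasEigenvector
  have hAv : A *ᵥ ofLp v = μ • ofLp v := congrArg ofLp (mem_eigenspace_iff.mp hv)
  have hv0' : ofLp v ≠ 0 := by simpa using hv0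
  have hpos : 0 < ofLp v ⬝ᵥ ofLp v := by simpa using PosDef.one.dotProduct_mulVec_pos hv0'
  have h1 := h₁.dotProduct_mulVec_nonneg (ofLp v)
  have h2 := h₂.dotProduct_mulVec_pos hv0'
  simp only [star_trivial, sub_mulVec, add_mulVec, one_mulVec, hAv, dotProduct_sub,
    dotProduct_add, dotProduct_smul, smul_eq_mul] at h1 h2
  constructor <;> nlinarith

lemma EuclideanSpace.starProjection_span_singleton_apply {ι : Type*} [Fintype ι]
    (w x : EuclideanSpace ℝ ι) (i : ι) :
    (ℝ ∙ w).starProjection x i = (∑ r, w r * x r) / (∑ r, w r * w r) * w i := by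
  rw [Submodule.starProjection_singleton, ← real_inner_self_eq_norm_sq]
  simp only [PiLp.smul_apply, smul_eq_mul, PiLp.inner_apply, RCLike.inner_apply, conj_trivial,
    RCLike.ofReal_real_eq_id, id, mul_comm]

section Graph

variable {n : ℕ} (G : SimpleGraph (Fin n)) [DecidableRel G.Adj]

lemma degT_eq (i : Fin n) : degT G i = G.degree i + 1 := by
  simp [degT, Atilde, Matrix.one_apply, Finset.sum_add_distrib,
    SimpleGraph.degree, SimpleGraph.neighborFinset_eq_filter]

lemma degT_pos (i : Fin n) : 0 < degT G i := by
  rw [degT_eq]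
  positivity

lemma sqrt_degT_pos (i : Fin n) : 0 < √(degT G i) := Real.sqrt_pos.mpr (degT_pos G i)

lemma Dtilde_eq : Dtilde G = G.degMatrix ℝ + 1 := by
  ext i j
  by_cases h : i = j <;> simp [Dtilde, degT_eq, SimpleGraph.degMatrix, h]

lemma Dtilde_sub_Atilde : Dtilde G - Atilde G = G.lapMatrix ℝ := by
  rw [Dtilde_eq, Atilde, SimpleGraph.lapMatrix]
  abel

lemma Dtilde_add_Atilde : Dtilde G + Atilde G = G.incMatrix ℝ * (G.incMatrix ℝ)ᵀ + 2 := by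
  ext i j
  by_cases h : i = j <;>
    simp [Dtilde_eq, Atilde, SimpleGraph.incMatrix_mul_transpose, SimpleGraph.degMatrix,
      Matrix.ofNat_apply, h, add_assoc, one_add_one_eq_two]

lemma transpose_DinvSqrt : (DinvSqrt G)ᵀ = DinvSqrt G := diagonal_transpose _

lemma DinvSqrt_mulVec_apply (v : Fin n → ℝ) (i : Fin n) :
    (DinvSqrt G *ᵥ v) i = v i / √(degT G i) := by
  rw [DinvSqrt, mulVec_diagonal, inv_mul_eq_div]

lemma DinvSqrt_mulVec_injective : Function.Injective (DinvSqrt G).mulVec := by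
  intro v w h
  funext i
  have := congrFun h i
  rwa [DinvSqrt_mulVec_apply, DinvSqrt_mulVec_apply, div_left_inj' (sqrt_degT_pos G i).ne'] at this

lemma DinvSqrt_mul_Dtilde_mul_DinvSqrt : DinvSqrt G * Dtilde G * DinvSqrt G = 1 := by
  rw [DinvSqrt, Dtilde, diagonal_mul_diagonal, diagonal_mul_diagonal, ← diagonal_one]
  congr 1
  funext i
  have := sqrt_degT_pos G i
  field_simp
  exact (Real.sq_sqrt (degT_pos G i).le).symm

lemma posSemidef_Lsym : (Lsym G).PosSemidef := by
  simpa [Lsym, Dtilde_sub_Atilde, transpose_DinvSqrt] using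
    (SimpleGraph.posSemidef_lapMatrix ℝ G).conjTranspose_mul_mul_same (DinvSqrt G)

lemma one_add_one_sub_Lsym :
    1 + (1 - Lsym G) = DinvSqrt G * (Dtilde G + Atilde G) * DinvSqrt G := by
  rw [Lsym, mul_sub, sub_mul, mul_add, add_mul, DinvSqrt_mul_Dtilde_mul_DinvSqrt]
  abel

lemma posDef_one_add_one_sub_Lsym : (1 + (1 - Lsym G)).PosDef := by
  have hDA : (Dtilde G + Atilde G).PosDef := by
    rw [Dtilde_add_Atilde]
    exact PosDef.posSemidef_add (posSemidef_self_mul_conjTranspose _) (.ofNat 2)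
  simpa [one_add_one_sub_Lsym, transpose_DinvSqrt] using
    hDA.conjTranspose_mul_mul_same (DinvSqrt_mulVec_injective G)

lemma Lsym_mulVec_eq_zero_iff {v : Fin n → ℝ} :
    Lsym G *ᵥ v = 0 ↔ ∀ i j, G.Reachable i j → v i / √(degT G i) = v j / √(degT G j) := by
  rw [Lsym, Dtilde_sub_Atilde, ← mulVec_mulVec, ← mulVec_mulVec,
    (DinvSqrt_mulVec_injective G).eq_iff' (mulVec_zero _),
    SimpleGraph.lapMatrix_mulVec_eq_zero_iff_forall_reachable]
  simp only [DinvSqrt_mulVec_apply]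

lemma eigenspace_one_sub_Lsym_eq_span (hconn : G.Connected) :
    eigenspace (toEuclideanLin (1 - Lsym G)) 1 = ℝ ∙ toLp 2 (fun i => √(degT G i)) := by
  ext v
  rw [mem_eigenspace_iff, one_smul, Submodule.mem_span_singleton, toLpLin_apply,
    ← (ofLp_injective 2).eq_iff, ofLp_toLp, sub_mulVec, one_mulVec, sub_eq_self,
    Lsym_mulVec_eq_zero_iff]
  constructor
  · intro h
    obtain ⟨j⟩ := hconn.nonempty
    refine ⟨v j / √(degT G j), ofLp_injective 2 (funext fun i => ?_)⟩
    rw [PiLp.smul_apply, smul_eq_mul, ← h i j (hconn.preconnected i j),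
      div_mul_cancel₀ _ (sqrt_degT_pos G i).ne']
  · rintro ⟨a, rfl⟩ i j -
    simp only [PiLp.smul_apply, smul_eq_mul]
    rw [mul_div_cancel_right₀ _ (sqrt_degT_pos G i).ne',
      mul_div_cancel_right₀ _ (sqrt_degT_pos G j).ne']

end Graph

/-- For a connected graph with self-loops, P^t H converges entrywise, and each column's
limit is the orthogonal projection of the corresponding column of H onto the span of
D̃^{1/2}·1. -/
theorem pow_P_converges_to_projection {n d : ℕ} (G : SimpleGraph (Fin n)) [DecidableRel G.Adj]
    (hconn : G.Connected) (H : Matrix (Fin n) (Fin d) ℝ) :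
    ∀ (i : Fin n) (c : Fin d),
      Filter.Tendsto (fun t : ℕ => ((1 - Lsym G) ^ t * H : Matrix (Fin n) (Fin d) ℝ) i c)
        Filter.atTop
        (nhds (((∑ r, Real.sqrt (degT G r) * H r c) / (∑ r, Real.sqrt (degT G r) * Real.sqrt (degT G r)))
          * Real.sqrt (degT G i))) := by
  intro i c
  have hT :=
    isSymmetric_toEuclideanLin_iff.mpr (isHermitian_one.sub (posSemidef_Lsym G).isHermitian)
  have hspec (μ : ℝ) : HasEigenvalue (toEuclideanLin (1 - Lsym G)) μ → μ ∈ Set.Ioc (-1) 1 :=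
    mem_Ioc_of_hasEigenvalue_toEuclideanLin (by simpa using posSemidef_Lsym G)
      (posDef_one_add_one_sub_Lsym G)
  have hlim := hT.tendsto_pow_apply_starProjection_eigenspace_one hspec (toLp 2 fun r => H r c)
  rw [eigenspace_one_sub_Lsym_eq_span G hconn] at hlim
  convert ((PiLp.continuous_apply 2 _ i).tendsto _).comp hlim using 2
  · rw [Function.comp_apply, ← toLpLin_pow, toLpLin_apply, ofLp_toLp, Matrix.mul_apply]
    rfl
  · rw [EuclideanSpace.starProjection_span_singleton_apply]
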